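/- Let D be obtained from D̃ by a single disjoint resolution: D = D̃ ∪ {C₃} where C₃ = (C₁ \ {r}) ∪ (C₂ \ {¬r}) for clauses C₁, C₂ ∈ D̃ with r ∈ C₁, ¬r ∈ C₂, and C₁ \ {r} and C₂ \ {¬r} have no literals in common. Then the upper revised valuations computed with D and with D̃ coincide: v* = ṽ* for every starting valuation v. -/

import Mathlib

open Finset

structure Doctrine (L : Type) [DecidableEq L] (neg : L → L) where
  clauses : Finset (Finset L)
  two_le : ∀ C ∈ clauses, 2 ≤ C.card
  tnd : ∀ p : L, ({p, neg p} : Finset L) ∈ clauses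

noncomputable def clauseMin {L : Type} [DecidableEq L] (neg : L → L) (v : L → ℝ) (p : L)
    (C : Finset L) : ℝ :=
  if h : (C.erase p).Nonempty then (C.erase p).inf' h (fun q => v (neg q)) else 0

noncomputable def step {L : Type} [DecidableEq L] (neg : L → L) (D : Doctrine L neg)
    (v : L → ℝ) : L → ℝ := fun p =>
  (D.clauses.filter (fun C => p ∈ C)).sup'
    ⟨{p, neg p}, Finset.mem_filter.mpr ⟨D.tnd p, by simp⟩⟩
    (clauseMin neg v p)

/-!
Adding clauses only enlarges `step`, so the iterates for `D̃` stay below those for `D`, and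
`ṽ* ≤ v*`. Conversely `ṽ*` is a prefixed point of the map for `D`. For `p ∈ C₁ \ {r}`, the value
`clauseMin ṽ* p C₃` is a minimum over `C₁ \ {r, p}` and `C₂ \ {¬r}`. Since `p ∉ C₂ \ {¬r}` by
disjointness, the second part is at most `clauseMin ṽ* (¬r) C₂ ≤ ṽ*(¬r)`, which is the term for
`q = r` in `clauseMin ṽ* p C₁ ≤ ṽ*(p)`. Finally, the iterates of `v` under a monotone map stay below
every prefixed point above `v`, so `v* ≤ ṽ*`.
-/

section

variable {L : Type} [DecidableEq L] {neg : L → L}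

namespace Doctrine

theorem ne_neg (D : Doctrine L neg) (p : L) : p ≠ neg p := by
  intro h
  have h2 := D.two_le _ (D.tnd p)
  rw [← h] at h2
  simp at h2

theorem erase_nonempty (D : Doctrine L neg) {C : Finset L} (hC : C ∈ D.clauses) (p : L) :
    (C.erase p).Nonempty := by
  have h2 := D.two_le C hC
  have := pred_card_le_card_erase (s := C) (a := p)
  exact card_pos.1 (by omega)

end Doctrine

theorem clauseMin_eq_inf' {v : L → ℝ} {p : L} {C : Finset L} (h : (C.erase p).Nonempty) :
    clauseMin neg v p C = (C.erase p).inf' h (fun q => v (neg q)) :=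
  dif_pos h

theorem clauseMin_mono (p : L) (C : Finset L) : Monotone fun v => clauseMin neg v p C := by
  intro v w h
  unfold clauseMin
  split
  · exact inf'_mono_fun fun q _ => h (neg q)
  · exact le_rfl

theorem clauseMin_pair (v : L → ℝ) {p q : L} (hpq : p ≠ q) :
    clauseMin neg v p {p, q} = v (neg q) := by
  have h : ({p, q} : Finset L).erase p = {q} := erase_insert (notMem_singleton.2 hpq)
  rw [clauseMin_eq_inf' (by rw [h]; exact singleton_nonempty q)]
  simp only [h, inf'_singleton]

theorem clauseMin_erase_union_le {w : L → ℝ} {C B : Finset L} {r p : L} (hr : r ∈ C)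
    (hpr : p ≠ r) (hpB : p ∉ B) (hB : B.Nonempty)
    (hBr : B.inf' hB (fun q => w (neg q)) ≤ w (neg r)) :
    clauseMin neg w p (C.erase r ∪ B) ≤ clauseMin neg w p C := by
  have hsub : B ⊆ (C.erase r ∪ B).erase p := fun x hx =>
    mem_erase.2 ⟨ne_of_mem_of_not_mem hx hpB, mem_union_right _ hx⟩
  rw [clauseMin_eq_inf' (hB.mono hsub), clauseMin_eq_inf' ⟨r, mem_erase.2 ⟨hpr.symm, hr⟩⟩]
  refine le_inf' _ _ fun q hq => ?_
  obtain rfl | hqr := eq_or_ne q r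
  · exact (inf'_mono _ hsub hB).trans hBr
  · obtain ⟨hqp, hqC⟩ := mem_erase.1 hq
    exact inf'_le _ (mem_erase.2 ⟨hqp, mem_union_left _ (mem_erase.2 ⟨hqr, hqC⟩)⟩)

theorem clauseMin_le_step (D : Doctrine L neg) (w : L → ℝ) {C : Finset L} {p : L}
    (hC : C ∈ D.clauses) (hp : p ∈ C) : clauseMin neg w p C ≤ step neg D w p :=
  le_sup' _ (mem_filter.2 ⟨hC, hp⟩)

theorem step_le_iff {D : Doctrine L neg} {w : L → ℝ} {p : L} {a : ℝ} :
    step neg D w p ≤ a ↔ ∀ C ∈ D.clauses, p ∈ C → clauseMin neg w p C ≤ a :=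
  (sup'_le_iff _ _).trans <| by simp only [mem_filter, and_imp]

theorem le_step (D : Doctrine L neg) (hneg : Function.Involutive neg) (w : L → ℝ) :
    w ≤ step neg D w := fun p => by
  simpa [clauseMin_pair w (D.ne_neg p), hneg p] using
    clauseMin_le_step D w (D.tnd p) (mem_insert_self p _)

theorem step_mono (D : Doctrine L neg) : Monotone (step neg D) := fun _ _ h _ =>
  step_le_iff.2 fun C hC hp => (clauseMin_mono _ C h).trans (clauseMin_le_step D _ hC hp)

theorem step_le_step_of_subset {D₁ D₂ : Doctrine L neg} (h : D₁.clauses ⊆ D₂.clauses) :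
    step neg D₁ ≤ step neg D₂ := fun w _ =>
  step_le_iff.2 fun _ hC hp => clauseMin_le_step D₂ w (h hC) hp

theorem clauseMin_resolvent_le (D : Doctrine L neg) {w : L → ℝ} (hw : step neg D w ≤ w)
    {C₁ C₂ : Finset L} {r s p : L} (hC₁ : C₁ ∈ D.clauses) (hC₂ : C₂ ∈ D.clauses)
    (hr : r ∈ C₁) (hs : s ∈ C₂) (hsr : s = neg r) (hp : p ∈ C₁.erase r)
    (hpC₂ : p ∉ C₂.erase s) :
    clauseMin neg w p (C₁.erase r ∪ C₂.erase s) ≤ w p := by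
  have hside : (C₂.erase s).inf' (D.erase_nonempty hC₂ s) (fun q => w (neg q)) ≤ w (neg r) := by
    rw [← clauseMin_eq_inf', ← hsr]
    exact (clauseMin_le_step D w hC₂ hs).trans (hw s)
  calc clauseMin neg w p (C₁.erase r ∪ C₂.erase s)
      ≤ clauseMin neg w p C₁ :=
        clauseMin_erase_union_le hr (mem_erase.1 hp).1 hpC₂ (D.erase_nonempty hC₂ s) hside
    _ ≤ step neg D w p := clauseMin_le_step D w hC₁ (mem_of_mem_erase hp)
    _ ≤ w p := hw p

theorem step_le_self_of_insert_resolvent (hneg : Function.Involutive neg)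
    {Dt D : Doctrine L neg} {w : L → ℝ} (hw : step neg Dt w ≤ w) {C₁ C₂ : Finset L} {r : L}
    (hC₁ : C₁ ∈ Dt.clauses) (hC₂ : C₂ ∈ Dt.clauses) (hr₁ : r ∈ C₁) (hr₂ : neg r ∈ C₂)
    (hdisj : Disjoint (C₁.erase r) (C₂.erase (neg r)))
    (hD : D.clauses = insert (C₁.erase r ∪ C₂.erase (neg r)) Dt.clauses) :
    step neg D w ≤ w := fun p => by
  rw [step_le_iff, hD]
  intro C hC hpC
  rcases mem_insert.1 hC with rfl | hC
  · rcases mem_union.1 hpC with hp | hp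
    · exact clauseMin_resolvent_le Dt hw hC₁ hC₂ hr₁ hr₂ rfl hp (disjoint_left.1 hdisj hp)
    · rw [union_comm]
      exact clauseMin_resolvent_le Dt hw hC₂ hC₁ hr₂ hr₁ (hneg r).symm hp
        (disjoint_right.1 hdisj hp)
  · exact (clauseMin_le_step Dt w hC hpC).trans (hw p)

end

theorem Monotone.iterate_le_of_le_of_map_le {α : Type*} [Preorder α] {f : α → α}
    (hf : Monotone f) {x y : α} (hxy : x ≤ y) (hy : f y ≤ y) (n : ℕ) : f^[n] x ≤ y :=
  (hf.iterate n hxy).trans (hf.antitone_iterate_of_map_le hy (Nat.zero_le n))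

theorem disjoint_resolution_star_equivalent_general {L : Type} [DecidableEq L]
    (neg : L → L) (hneg : ∀ p, neg (neg p) = p)
    (Dt D : Doctrine L neg) (C₁ C₂ C₃ : Finset L) (r : L)
    (hC₁ : C₁ ∈ Dt.clauses) (hC₂ : C₂ ∈ Dt.clauses)
    (hr₁ : r ∈ C₁) (hr₂ : neg r ∈ C₂)
    (hdisj : Disjoint (C₁.erase r) (C₂.erase (neg r)))
    (hC₃ : C₃ = C₁.erase r ∪ C₂.erase (neg r))
    (hD : D.clauses = insert C₃ Dt.clauses)
    (v vst vs : L → ℝ)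
    (hvst : ∃ n : ℕ, vst = (step neg Dt)^[n] v) (hfixt : step neg Dt vst = vst)
    (hvs : ∃ n : ℕ, vs = (step neg D)^[n] v) (hfix : step neg D vs = vs) :
    vs = vst := by
  obtain ⟨n, rfl⟩ := hvst
  obtain ⟨m, rfl⟩ := hvs
  subst hC₃
  have hsub : Dt.clauses ⊆ D.clauses := hD ▸ subset_insert _ _
  have hprefixed : step neg D ((step neg Dt)^[n] v) ≤ (step neg Dt)^[n] v :=
    step_le_self_of_insert_resolvent hneg hfixt.le hC₁ hC₂ hr₁ hr₂ hdisj hD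
  apply le_antisymm
  · exact (step_mono D).iterate_le_of_le_of_map_le
      (Function.id_le_iterate_of_id_le (le_step Dt hneg) n v) hprefixed m
  · calc (step neg Dt)^[n] v
        ≤ (step neg D)^[n] v := (step_mono Dt).iterate_le_of_le (step_le_step_of_subset hsub) n v
      _ ≤ (step neg D)^[m] v := (step_mono D).iterate_le_of_le_of_map_le
          (Function.id_le_iterate_of_id_le (le_step D hneg) m v) hfix.le n

theorem disjoint_resolution_star_equivalent {L : Type} [Fintype L] [DecidableEq L]
    (neg : L → L) (hneg : ∀ p, neg (neg p) = p)
    (Dt D : Doctrine L neg) (C₁ C₂ C₃ : Finset L) (r : L)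
    (hC₁ : C₁ ∈ Dt.clauses) (hC₂ : C₂ ∈ Dt.clauses)
    (hr₁ : r ∈ C₁) (hr₂ : neg r ∈ C₂)
    (hdisj : Disjoint (C₁.erase r) (C₂.erase (neg r)))
    (hC₃ : C₃ = C₁.erase r ∪ C₂.erase (neg r))
    (hD : D.clauses = insert C₃ Dt.clauses)
    (v vst vs : L → ℝ) (hv : ∀ p, 0 ≤ v p ∧ v p ≤ 1)
    (hvst : ∃ n : ℕ, vst = (step neg Dt)^[n] v) (hfixt : step neg Dt vst = vst)
    (hvs : ∃ n : ℕ, vs = (step neg D)^[n] v) (hfix : step neg D vs = vs) :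
    vs = vst :=
  disjoint_resolution_star_equivalent_general neg hneg Dt D C₁ C₂ C₃ r hC₁ hC₂ hr₁ hr₂ hdisj hC₃ hD
    v vst vs hvst hfixt hvs hfix
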